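/- Let b ≥ 1 be a real number. If a is a real number with a ≥ 9(b+1)²/(2b), then d(a,b) = √(a/(2b)). -/
import Mathlib

set_option maxHeartbeats 1000000

open Finset

def emb2 : (Σ _ : ℕ, ℕ) ↪ ℕ × ℕ :=
  ⟨fun x => (x.2, x.1), fun x y h => by
    cases x; cases y
    simp only [Prod.mk.injEq] at h
    simp [h.1, h.2]⟩

noncomputable def stair (a T : ℝ) (Q : ℕ) : Finset (ℕ × ℕ) :=
  ((Finset.range (Q+1)).sigma fun q => Finset.range (⌊T - q*a⌋₊ + 1)).map emb2

lemma stair_card (a T : ℝ) (Q : ℕ) :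
    (stair a T Q).card = ∑ q ∈ Finset.range (Q+1), (⌊T - q*a⌋₊ + 1) := by
  rw [stair, Finset.card_map, Finset.card_sigma]
  simp

lemma mem_stair {a T : ℝ} {Q : ℕ} (p : ℕ × ℕ) :
    p ∈ stair a T Q ↔ p.2 ≤ Q ∧ p.1 ≤ ⌊T - p.2*a⌋₊ := by
  simp only [stair, Finset.mem_map, Finset.mem_sigma, Finset.mem_range, emb2,
    Function.Embedding.coeFn_mk]
  constructor
  · rintro ⟨⟨q, p'⟩, ⟨hq, hp⟩, rfl⟩
    exact ⟨Nat.lt_succ_iff.1 hq, Nat.lt_succ_iff.1 hp⟩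
  · rintro ⟨h1, h2⟩
    exact ⟨⟨p.2, p.1⟩, ⟨Nat.lt_succ_iff.2 h1, Nat.lt_succ_iff.2 h2⟩, rfl⟩

lemma count_finite {a t : ℝ} (ha : 0 < a) :
    {p : ℕ × ℕ | (p.1 : ℝ) * 1 + (p.2 : ℝ) * a ≤ t}.Finite := by
  apply Set.Finite.subset (Finset.range (⌊t⌋₊+1) ×ˢ Finset.range (⌊t/a⌋₊+1)).finite_toSet
  rintro ⟨p, q⟩ hpq
  simp only [Set.mem_setOf_eq] at hpq
  have hp : (p:ℝ) ≤ t := by nlinarith [Nat.cast_nonneg (α := ℝ) q, Nat.cast_nonneg (α := ℝ) p]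
  have hq : (q:ℝ) ≤ t/a := by
    rw [le_div_iff₀ ha]
    nlinarith [Nat.cast_nonneg (α := ℝ) p]
  simp only [Finset.coe_product, Set.mem_prod, Finset.mem_coe, Finset.mem_range,
    Nat.lt_succ_iff]
  exact ⟨Nat.le_floor hp, Nat.le_floor hq⟩

lemma count_lower {a T : ℝ} (ha : 0 < a) (Q K : ℕ)
    (hQ : (Q:ℝ) * a ≤ T)
    (hsum : (K : ℝ) ≤ 1 + (Q+1)*T - a*(Q*(Q+1))/2) :
    K ≤ {p : ℕ × ℕ | (p.1 : ℝ) * 1 + (p.2 : ℝ) * a ≤ T}.ncard := by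
  have hsub : ↑(stair a T Q) ⊆ {p : ℕ × ℕ | (p.1 : ℝ) * 1 + (p.2 : ℝ) * a ≤ T} := by
    intro p hp
    rw [Finset.mem_coe, mem_stair] at hp
    have h2a : (p.2:ℝ) * a ≤ (Q:ℝ) * a := by
      apply mul_le_mul_of_nonneg_right _ ha.le
      exact_mod_cast hp.1
    have hfl : (p.1:ℝ) ≤ T - p.2*a := by
      calc (p.1:ℝ) ≤ (⌊T - p.2*a⌋₊ : ℝ) := by exact_mod_cast hp.2
        _ ≤ T - p.2*a := Nat.floor_le (by linarith)
    simp only [Set.mem_setOf_eq]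
    linarith
  -- card lower bound
  have hgauss : (∑ q ∈ Finset.range (Q+1), (q:ℝ)) = Q*(Q+1)/2 := by
    have h : (∑ i ∈ Finset.range (Q+1), i) * 2 = (Q+1) * Q := by
      simpa using Finset.sum_range_id_mul_two (Q+1)
    have h' := congrArg (Nat.cast (R := ℝ)) h
    push_cast at h' ⊢
    linarith
  have hlt : (K : ℝ) - 1 < ((stair a T Q).card : ℝ) := by
    have hstrict : ∑ q ∈ Finset.range (Q+1), (T - q*a)
        < ∑ q ∈ Finset.range (Q+1), ((⌊T - q*a⌋₊ : ℝ) + 1) := by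
      apply Finset.sum_lt_sum_of_nonempty (by simp)
      intro q _
      exact Nat.lt_floor_add_one _
    have hsum2 : ∑ q ∈ Finset.range (Q+1), (T - q*a) = (Q+1)*T - a*(Q*(Q+1))/2 := by
      rw [Finset.sum_sub_distrib, Finset.sum_const, Finset.card_range]
      rw [← Finset.sum_mul, hgauss]
      push_cast
      ring
    have hcard : ((stair a T Q).card : ℝ) = ∑ q ∈ Finset.range (Q+1), ((⌊T - q*a⌋₊ : ℝ) + 1) := by
      rw [stair_card]
      push_cast
      rfl
    rw [hcard]
    linarith
  have hKcard : K ≤ (stair a T Q).card := by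
    by_contra hcon
    push_neg at hcon
    have : ((stair a T Q).card : ℝ) ≤ (K:ℝ) - 1 := by
      have : (stair a T Q).card + 1 ≤ K := hcon
      have := (Nat.cast_le (α := ℝ)).2 this
      push_cast at this
      linarith
    linarith
  calc K ≤ (stair a T Q).card := hKcard
    _ = (↑(stair a T Q) : Set (ℕ × ℕ)).ncard := (Set.ncard_coe_finset _).symm
    _ ≤ _ := Set.ncard_le_ncard hsub (count_finite ha)

lemma count_upper {a t : ℝ} (ha : 0 < a) (ht : 0 ≤ t) (K : ℕ)
    (h : (t + 1 + a/2)^2 < 2*a*K) :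
    {p : ℕ × ℕ | (p.1 : ℝ) * 1 + (p.2 : ℝ) * a ≤ t}.ncard < K := by
  set Q := ⌊t/a⌋₊ with hQdef
  have hsub : {p : ℕ × ℕ | (p.1 : ℝ) * 1 + (p.2 : ℝ) * a ≤ t} ⊆ ↑(stair a t Q) := by
    rintro ⟨p, q⟩ hpq
    simp only [Set.mem_setOf_eq] at hpq
    rw [Finset.mem_coe, mem_stair]
    have hq : (q:ℝ) ≤ t/a := by
      rw [le_div_iff₀ ha]
      nlinarith [Nat.cast_nonneg (α := ℝ) p]
    refine ⟨Nat.le_floor hq, Nat.le_floor ?_⟩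
    simp only
    push_cast
    linarith
  have hQle : (Q:ℝ)*a ≤ t := by
    have := Nat.floor_le (div_nonneg ht ha.le)
    rw [← hQdef] at this
    calc (Q:ℝ)*a ≤ (t/a)*a := by nlinarith
      _ = t := by field_simp
  have hQgt : t < ((Q:ℝ)+1)*a := by
    have := Nat.lt_floor_add_one (t/a)
    rw [← hQdef] at this
    calc t = (t/a)*a := by field_simp
      _ < ((Q:ℝ)+1)*a := by nlinarith
  have hcardle : ((stair a t Q).card : ℝ) ≤ (Q+1)*(t+1) - a*(Q*(Q+1))/2 := by
    have hterm : ∀ q ∈ Finset.range (Q+1), ((⌊t - q*a⌋₊ : ℝ) + 1) ≤ (t - q*a) + 1 := by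
      intro q hq
      have hqQ : (q:ℝ) ≤ Q := by
        exact_mod_cast Nat.lt_succ_iff.1 (Finset.mem_range.1 hq)
      have : (q:ℝ)*a ≤ t := le_trans (by nlinarith) hQle
      have := Nat.floor_le (by linarith : (0:ℝ) ≤ t - q*a)
      linarith
    have hgauss : (∑ q ∈ Finset.range (Q+1), (q:ℝ)) = Q*(Q+1)/2 := by
      have h : (∑ i ∈ Finset.range (Q+1), i) * 2 = (Q+1) * Q := by
        simpa using Finset.sum_range_id_mul_two (Q+1)
      have h' := congrArg (Nat.cast (R := ℝ)) h
      push_cast at h' ⊢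
      linarith
    have hcard : ((stair a t Q).card : ℝ) = ∑ q ∈ Finset.range (Q+1), ((⌊t - q*a⌋₊ : ℝ) + 1) := by
      rw [stair_card]; push_cast; rfl
    rw [hcard]
    calc ∑ q ∈ Finset.range (Q+1), ((⌊t - q*a⌋₊ : ℝ) + 1)
        ≤ ∑ q ∈ Finset.range (Q+1), ((t - q*a) + 1) := Finset.sum_le_sum hterm
      _ = (Q+1)*(t+1) - a*(Q*(Q+1))/2 := by
          rw [Finset.sum_add_distrib, Finset.sum_sub_distrib, Finset.sum_const,
            Finset.sum_const, Finset.card_range, ← Finset.sum_mul, hgauss]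
          push_cast
          ring
  have hquad : (Q:ℝ)*(Q+1)*a^2 ≤ 0 → True := fun _ => trivial
  have hbound : ((stair a t Q).card : ℝ) < K := by
    have key : 2*a*((Q+1)*(t+1) - a*(Q*(Q+1))/2) ≤ (t + 1 + a/2)^2 := by
      nlinarith [sq_nonneg (t + 1 - a*Q - a/2)]
    nlinarith
  have : (stair a t Q).card < K := by exact_mod_cast hbound
  calc {p : ℕ × ℕ | (p.1 : ℝ) * 1 + (p.2 : ℝ) * a ≤ t}.ncard
      ≤ (↑(stair a t Q) : Set (ℕ × ℕ)).ncard := Set.ncard_le_ncard hsub (stair a t Q).finite_toSet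
    _ = (stair a t Q).card := Set.ncard_coe_finset _
    _ < K := this

section auxQ
variable (b l0 : ℝ)

variable (b l0 : ℝ)

lemma exists_Q (hb : 1 ≤ b) (hl0 : 3*(b+1) ≤ 2*b*l0) (m n : ℕ) :
    ∃ Q : ℕ, (Q:ℝ)*(2*b*l0^2) ≤ l0*((m:ℝ)*1 + n*b) ∧
      ((m+1)*(n+1) : ℝ) ≤ 1 + ((Q:ℝ)+1)*(l0*((m:ℝ)*1 + n*b))
        - (2*b*l0^2)*((Q:ℝ)*((Q:ℝ)+1))/2 := by
  have hb0 : (0:ℝ) < b := lt_of_lt_of_le one_pos hb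
  have hl1 : b + 3 ≤ 2*b*(l0-1) := by nlinarith
  have hl0gt1 : 1 < l0 := by nlinarith
  have hm0 : (0:ℝ) ≤ (m:ℝ) := Nat.cast_nonneg m
  have hn0 : (0:ℝ) ≤ (n:ℝ) := Nat.cast_nonneg n
  have hkey : 1 ≤ b*(l0-1)^2 := by
    have h4 : (b+3)^2 ≤ (2*b*(l0-1))^2 := by nlinarith
    nlinarith [h4, hb0, sq_nonneg (b-1), mul_pos hb0 hb0]
  by_cases hcase : 2*b*l0*(n:ℝ) ≤ (m:ℝ) + n*b
  · -- Case I : Q = n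
    refine ⟨n, ?_, ?_⟩
    · nlinarith [mul_le_mul_of_nonneg_left hcase (show (0:ℝ) ≤ l0 by linarith)]
    · have hA : (n:ℝ)*b*(l0-1) ≤ (m:ℝ) - l0*(n:ℝ)*b := by nlinarith
      have hnn : (0:ℝ) ≤ ((n:ℝ)+1)*(l0-1) := by nlinarith
      have s1 : ((n:ℝ)+1)*(l0-1)*((n:ℝ)*b*(l0-1)) ≤ ((n:ℝ)+1)*(l0-1)*((m:ℝ) - l0*(n:ℝ)*b) :=
        mul_le_mul_of_nonneg_left hA hnn
      have s2 : (n:ℝ) ≤ ((n:ℝ)+1)*(l0-1)*((n:ℝ)*b*(l0-1)) := by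
        have h6 : (n:ℝ)*((n:ℝ)+1)*1 ≤ (n:ℝ)*((n:ℝ)+1)*(b*(l0-1)^2) :=
          mul_le_mul_of_nonneg_left hkey (by nlinarith)
        nlinarith
      nlinarith [s1, s2]
  · -- Case II : Q = floor (T/a)
    push_neg at hcase
    have hn1 : (1:ℝ) ≤ (n:ℝ) := by
      rcases Nat.eq_zero_or_pos n with rfl | hn
      · simp at hcase; nlinarith
      · exact_mod_cast hn
    set a := 2*b*l0^2 with hadef
    set T := l0*((m:ℝ)*1 + n*b) with hTdef
    have ha0 : 0 < a := by rw [hadef]; nlinarith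
    have hT0 : 0 ≤ T := by rw [hTdef]; nlinarith
    refine ⟨⌊T/a⌋₊, ?_, ?_⟩
    · have h1 : (⌊T/a⌋₊ : ℝ) ≤ T/a := Nat.floor_le (div_nonneg hT0 ha0.le)
      calc (⌊T/a⌋₊:ℝ) * a ≤ (T/a)*a := mul_le_mul_of_nonneg_right h1 ha0.le
        _ = T := by field_simp
    · set Q : ℕ := ⌊T/a⌋₊ with hQdef
      have hQa : (Q:ℝ)*a ≤ T := by
        have h1 : (Q:ℝ) ≤ T/a := Nat.floor_le (div_nonneg hT0 ha0.le)
        calc (Q:ℝ) * a ≤ (T/a)*a := mul_le_mul_of_nonneg_right h1 ha0.le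
          _ = T := by field_simp
      have hQ2 : T < ((Q:ℝ)+1)*a := by
        have h2 : T/a < (Q:ℝ)+1 := Nat.lt_floor_add_one (T/a)
        calc T = (T/a)*a := by field_simp
          _ < ((Q:ℝ)+1)*a := by
              apply mul_lt_mul_of_pos_right h2 ha0
      have key1 : T^2 + a*T ≤ 2*a*(((Q:ℝ)+1)*T - a*((Q:ℝ)*((Q:ℝ)+1))/2) := by
        nlinarith [mul_nonneg (sub_nonneg.2 hQa) (sub_nonneg.2 hQ2.le)]
      have step2 : ((m:ℝ)*n + m + n) * (4*b) ≤ ((m:ℝ)+n*b)^2 + 2*b*l0*((m:ℝ)+n*b) := by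
        have h3 : 3*(b+1)*((m:ℝ)+n*b) ≤ 2*b*l0*((m:ℝ)+n*b) :=
          mul_le_mul_of_nonneg_right hl0 (by nlinarith)
        -- reduces to b*m + b*n ≤ (m-n*b)^2 + 3*m + 3*n*b^2
        have hred : b*(m:ℝ) + b*n ≤ ((m:ℝ)-n*b)^2 + 3*m + 3*n*b^2 := by
          by_cases hmc : (m:ℝ) ≤ 2*n*b
          · nlinarith [mul_le_mul_of_nonneg_left hmc hb0.le,
              mul_nonneg hn0 (mul_nonneg hb0.le (sub_nonneg.2 hb))]
          · push_neg at hmc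
            have hnb : b ≤ (n:ℝ)*b := le_mul_of_one_le_left hb0.le hn1
            have hu : b ≤ (m:ℝ) - n*b := by linarith
            have husq : b*((m:ℝ)-n*b) ≤ ((m:ℝ)-n*b)^2 := by
              nlinarith [mul_le_mul_of_nonneg_right hu (le_trans hb0.le hu)]
            nlinarith [mul_nonneg hn0 (mul_nonneg hb0.le (sub_nonneg.2 hb))]
        nlinarith [h3]
      have h5 : 2*a*((m:ℝ)*n + m + n) ≤ T^2 + a*T := by
        have h6 : l0^2 * (((m:ℝ)*n + m + n) * (4*b)) ≤
            l0^2 * (((m:ℝ)+n*b)^2 + 2*b*l0*((m:ℝ)+n*b)) :=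
          mul_le_mul_of_nonneg_left step2 (sq_nonneg l0)
        have e1 : T^2 + a*T = l0^2 * (((m:ℝ)+n*b)^2 + 2*b*l0*((m:ℝ)+n*b)) := by
          rw [hTdef, hadef]; ring
        have e2 : 2*a*((m:ℝ)*n + m + n) = l0^2 * (((m:ℝ)*n + m + n) * (4*b)) := by
          rw [hadef]; ring
        rw [e1, e2]; exact h6
      have h7 : ((m:ℝ)*n + m + n) ≤ ((Q:ℝ)+1)*T - a*((Q:ℝ)*((Q:ℝ)+1))/2 := by
        have h8 : 2*a*((m:ℝ)*n + m + n) ≤ 2*a*(((Q:ℝ)+1)*T - a*((Q:ℝ)*((Q:ℝ)+1))/2) :=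
          le_trans h5 key1
        exact le_of_mul_le_mul_left h8 (by linarith)
      push_cast
      nlinarith [h7]

end auxQ

/-- `Nseq a b k` is the `k`-th term (indexed from 0) of the nondecreasing sequence listing,
with multiplicities, all numbers `m*a + n*b` with `m n : ℕ`; equivalently the least `t ≥ 0`
such that there are at least `k+1` pairs `(m,n)` with `m*a + n*b ≤ t`. -/
noncomputable def Nseq (a b : ℝ) (k : ℕ) : ℝ :=
  sInf {t : ℝ | 0 ≤ t ∧ k + 1 ≤ {p : ℕ × ℕ | (p.1 : ℝ) * a + (p.2 : ℝ) * b ≤ t}.ncard}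

/-- `Mseq c d k = min {m*c + n*d : (m+1)*(n+1) ≥ k+1}`. -/
noncomputable def Mseq (c d : ℝ) (k : ℕ) : ℝ :=
  sInf {t : ℝ | ∃ m n : ℕ, k + 1 ≤ (m + 1) * (n + 1) ∧ t = (m : ℝ) * c + (n : ℝ) * d}

/-- `dFun a b = inf {λ > 0 : N_k(1,a) ≤ λ M_k(1,b) for all k}`. -/
noncomputable def dFun (a b : ℝ) : ℝ :=
  sInf {l : ℝ | 0 < l ∧ ∀ k : ℕ, Nseq 1 a k ≤ l * Mseq 1 b k}

section middle
variable {a b l0 : ℝ}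

lemma Nle (hb : 1 ≤ b) (hl0 : 3*(b+1) ≤ 2*b*l0) (haeq : a = 2*b*l0^2)
    (k m n : ℕ) (hk : k + 1 ≤ (m + 1) * (n + 1)) :
    Nseq 1 a k ≤ l0 * ((m:ℝ)*1 + (n:ℝ)*b) := by
  have hb0 : (0:ℝ) < b := lt_of_lt_of_le one_pos hb
  have hl0pos : 0 < l0 := by nlinarith
  have ha0 : 0 < a := by rw [haeq]; positivity
  obtain ⟨Q, hQ1, hQ2⟩ := exists_Q b l0 hb hl0 m n
  apply csInf_le ⟨0, fun t ht => ht.1⟩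
  constructor
  · have : (0:ℝ) ≤ (m:ℝ)*1 + n*b := by positivity
    positivity
  · apply count_lower ha0 Q (k+1)
    · rw [haeq]; exact hQ1
    · have hcast : ((k:ℝ)+1) ≤ ((m:ℝ)+1)*((n:ℝ)+1) := by exact_mod_cast hk
      rw [haeq]
      push_cast
      push_cast at hQ2
      linarith

lemma NleM (hb : 1 ≤ b) (hl0 : 3*(b+1) ≤ 2*b*l0) (haeq : a = 2*b*l0^2) (k : ℕ) :
    Nseq 1 a k ≤ l0 * Mseq 1 b k := by
  have hb0 : (0:ℝ) < b := lt_of_lt_of_le one_pos hb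
  have hl0pos : 0 < l0 := by nlinarith
  have hMne : {t : ℝ | ∃ m n : ℕ, k + 1 ≤ (m + 1) * (n + 1) ∧
      t = (m : ℝ) * 1 + (n : ℝ) * b}.Nonempty :=
    ⟨(k:ℝ) * 1 + (0:ℕ) * b, k, 0, by simp, by push_cast; ring⟩
  have hdiv : Nseq 1 a k / l0 ≤ Mseq 1 b k := by
    apply le_csInf hMne
    rintro t ⟨m, n, hmn, rfl⟩
    rw [div_le_iff₀ hl0pos]
    calc Nseq 1 a k ≤ l0 * ((m:ℝ)*1 + (n:ℝ)*b) := Nle hb hl0 haeq k m n hmn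
      _ = ((m:ℝ)*1 + (n:ℝ)*b) * l0 := by ring
  rw [div_le_iff₀ hl0pos] at hdiv
  linarith

lemma lowerBound (hb : 1 ≤ b) (hl0 : 3*(b+1) ≤ 2*b*l0) (haeq : a = 2*b*l0^2)
    (l : ℝ) (hl : 0 < l) (hall : ∀ k : ℕ, Nseq 1 a k ≤ l * Mseq 1 b k) :
    l0 ≤ l := by
  have hb0 : (0:ℝ) < b := lt_of_lt_of_le one_pos hb
  have hl0pos : 0 < l0 := by nlinarith
  have ha0 : 0 < a := by rw [haeq]; positivity
  by_contra hcon
  push_neg at hcon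
  obtain ⟨n, hn⟩ := exists_nat_gt ((l + 1 + a/2)/(2*b*(l0 - l)))
  have hn2 : l + 1 + a/2 < 2*b*(n:ℝ)*(l0-l) := by
    rw [div_lt_iff₀ (by nlinarith)] at hn
    nlinarith
  have hn0 : (0:ℝ) ≤ (n:ℝ) := Nat.cast_nonneg n
  set m : ℕ := ⌈(n:ℝ)*b⌉₊ with hmdef
  have hm1 : (n:ℝ)*b ≤ (m:ℝ) := Nat.le_ceil _
  have hm2 : (m:ℝ) ≤ (n:ℝ)*b + 1 := by
    have := Nat.ceil_lt_add_one (by positivity : (0:ℝ) ≤ (n:ℝ)*b)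
    rw [← hmdef] at this
    linarith
  set k : ℕ := (m+1)*(n+1) - 1 with hkdef
  have hk : k + 1 = (m+1)*(n+1) := by
    rw [hkdef]
    have : 1 ≤ (m+1)*(n+1) := Nat.one_le_iff_ne_zero.2 (by positivity)
    omega
  have hM : Mseq 1 b k ≤ (m:ℝ)*1 + (n:ℝ)*b := by
    apply csInf_le
    · refine ⟨0, ?_⟩
      rintro t ⟨m', n', _, rfl⟩
      have : (0:ℝ) ≤ (m':ℝ)*1 + (n':ℝ)*b := by positivity
      exact this
    · exact ⟨m, n, le_of_eq hk, rfl⟩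
  have hN : 2*b*l0*(n:ℝ) - 1 - a/2 ≤ Nseq 1 a k := by
    apply le_csInf
    · refine ⟨(k:ℝ), ⟨Nat.cast_nonneg k, ?_⟩⟩
      apply count_lower ha0 0 (k+1)
      · simp [Nat.cast_nonneg]
      · push_cast
        linarith
    · rintro t ⟨ht0, htc⟩
      by_contra htcon
      push_neg at htcon
      have h2 : t + 1 + a/2 < 2*b*l0*(n:ℝ) := by linarith
      have h3 : (t+1+a/2)^2 < (2*b*l0*(n:ℝ))^2 := by nlinarith
      have h5 : b*(n:ℝ)^2 ≤ ((k+1 : ℕ):ℝ) := by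
        rw [hk]
        push_cast
        nlinarith
      have h6 : (t+1+a/2)^2 < 2*a*((k+1 : ℕ):ℝ) := by
        have h4 : (2*b*l0*(n:ℝ))^2 = 2*a*(b*(n:ℝ)^2) := by rw [haeq]; ring
        nlinarith
      have := count_upper ha0 ht0 (k+1) (by push_cast at h6 ⊢; exact h6)
      omega
  have hchain : 2*b*l0*(n:ℝ) - 1 - a/2 ≤ l * ((m:ℝ)*1 + (n:ℝ)*b) :=
    le_trans hN (le_trans (hall k) (mul_le_mul_of_nonneg_left hM hl.le))
  nlinarith


end middle

theorem rigidity (b : ℝ) (hb : 1 ≤ b) (a : ℝ) (ha : 9 * (b + 1) ^ 2 / (2 * b) ≤ a) :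
    dFun a b = Real.sqrt (a / (2 * b)) := by
  have hb0 : (0:ℝ) < b := lt_of_lt_of_le one_pos hb
  have ha0 : 0 < a := lt_of_lt_of_le (by positivity) ha
  set l0 := Real.sqrt (a / (2*b)) with hl0def
  have h2b : (0:ℝ) < 2*b := by linarith
  have hl0sq : l0^2 = a/(2*b) := Real.sq_sqrt (by positivity)
  have haeq : a = 2*b*l0^2 := by rw [hl0sq]; field_simp
  have hsq : (3*(b+1))^2 ≤ (2*b*l0)^2 := by
    calc (3*(b+1))^2 = 2*b*(9*(b+1)^2/(2*b)) := by field_simp; ring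
      _ ≤ 2*b*a := mul_le_mul_of_nonneg_left ha h2b.le
      _ = (2*b*l0)^2 := by rw [haeq]; ring
  have hl0nn : 0 ≤ l0 := Real.sqrt_nonneg _
  have hl0 : 3*(b+1) ≤ 2*b*l0 :=
    (pow_le_pow_iff_left₀ (by positivity) (mul_nonneg h2b.le hl0nn) two_ne_zero).1 hsq
  have hl0pos : 0 < l0 := by nlinarith
  have hmem : l0 ∈ {l : ℝ | 0 < l ∧ ∀ k : ℕ, Nseq 1 a k ≤ l * Mseq 1 b k} :=
    ⟨hl0pos, fun k => NleM hb hl0 haeq k⟩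
  unfold dFun
  apply le_antisymm
  · exact csInf_le ⟨0, fun x hx => hx.1.le⟩ hmem
  · exact le_csInf ⟨l0, hmem⟩ (fun l hl => lowerBound hb hl0 haeq l hl.1 hl.2)
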